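/- arXiv:1504.04059 — 3 statements merged into one kernel-verified Lean document; each statement's English description precedes it below -/
import Mathlib

section
/- Let n ≥ 1. Consider weights in Z^{2n} (or Q^{2n}) written as λ = (λ_1,...,λ_n | μ_1,...,μ_n). Suppose λ is a linear combination with nonnegative integer coefficients of the vectors ε_i − δ_j for i > j (where ε_i is the i-th standard basis vector among the first n coordinates and δ_j the j-th among the last n) and δ_k − ε_l for k > l. If λ satisfies the dominance conditions ⟨ε_s − ε_{s+1}, λ⟩ ≥ 0 and ⟨δ_s − δ_{s+1}, λ⟩ ≥ 0 for all 1 ≤ s ≤ n−1 (with respect to the standard inner product), then λ = 0. -/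
/-- `ε_i`, the `i`-th standard basis vector among the first `n` coordinates of `ℚ^{2n}`. -/
noncomputable def epsV (n : ℕ) (i : Fin n) : (Fin n ⊕ Fin n) → ℚ := Pi.single (Sum.inl i) 1

/-- `δ_j`, the `j`-th standard basis vector among the last `n` coordinates of `ℚ^{2n}`. -/
noncomputable def deltaV (n : ℕ) (j : Fin n) : (Fin n ⊕ Fin n) → ℚ := Pi.single (Sum.inr j) 1

/-- The standard inner product on `ℚ^{2n}`. -/
noncomputable def inn (n : ℕ) (v w : (Fin n ⊕ Fin n) → ℚ) : ℚ := ∑ t, v t * w t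


/-!
Pairing `λ` with `∑ₜ wₜ (εₜ + δₜ)` gives `∑ᵢⱼ (aᵢⱼ + bᵢⱼ) (wᵢ - wⱼ)`, since `εᵢ - δⱼ` and `δᵢ - εⱼ`
both pair to `wᵢ - wⱼ`. With `w = 1` this says that `zₜ = λₜ + μₜ` sums to zero, and the dominance
conditions say that `z` is antitone, so Chebyshev's sum inequality gives `∑ₜ t zₜ ≤ 0`. With
`wₜ = t` the same pairing is `∑ᵢⱼ (aᵢⱼ + bᵢⱼ) (i - j)`, whose terms are nonnegative and vanish only
if `aᵢⱼ = bᵢⱼ = 0`.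
-/

open Finset Matrix Sum

theorem Fin.antitone_of_forall_succ_le {α : Type*} [Preorder α] {n : ℕ} {f : Fin n → α}
    (h : ∀ (s : Fin n) (hs : (s : ℕ) + 1 < n), f ⟨(s : ℕ) + 1, hs⟩ ≤ f s) : Antitone f := by
  cases n with
  | zero => exact fun i => i.elim0
  | succ m => exact Fin.antitone_iff_succ_le.2 fun i => h i.castSucc (by simp)

theorem Monotone.sum_mul_nonpos_of_antitone {ι α : Type*} [LinearOrder ι] [Fintype ι]
    [CommRing α] [LinearOrder α] [IsStrictOrderedRing α] {f g : ι → α}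
    (hf : Monotone f) (hg : Antitone g) (hg_sum : ∑ i, g i = 0) : ∑ i, f i * g i ≤ 0 := by
  have chebyshev := (hf.antivary hg).card_mul_sum_le_sum_mul_sum
  rw [hg_sum, mul_zero] at chebyshev
  cases isEmpty_or_nonempty ι
  · simp
  · exact nonpos_of_mul_nonpos_right chebyshev (by exact_mod_cast Fintype.card_pos)

theorem eq_zero_of_sum_mul_sub_nonpos {ι α : Type*} [LinearOrder ι] [Fintype ι]
    [CommRing α] [LinearOrder α] [IsStrictOrderedRing α] {w : ι → α} (hw : StrictMono w)
    {c : ι → ι → α} (hc : 0 ≤ c) (hc_lt : ∀ i j, ¬ j < i → c i j = 0)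
    (h : ∑ i, ∑ j, c i j * (w i - w j) ≤ 0) : c = 0 := by
  have hterm : ∀ i j, 0 ≤ c i j * (w i - w j) := fun i j => by
    by_cases hji : j < i
    · exact mul_nonneg (hc i j) (sub_nonneg.2 (hw hji).le)
    · simp [hc_lt i j hji]
  have hzero : ∀ i j, c i j * (w i - w j) = 0 := fun i j => by
    have hrow := (Fintype.sum_eq_zero_iff_of_nonneg fun i => sum_nonneg fun j _ => hterm i j).1
      (h.antisymm (sum_nonneg fun i _ => sum_nonneg fun j _ => hterm i j))
    exact congrFun ((Fintype.sum_eq_zero_iff_of_nonneg (hterm i)).1 (congrFun hrow i)) j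
  ext i j
  by_cases hji : j < i
  · exact (mul_eq_zero.1 (hzero i j)).resolve_right (sub_ne_zero.2 (hw hji).ne')
  · exact hc_lt i j hji

theorem inn_eq_dotProduct (n : ℕ) (v w : Fin n ⊕ Fin n → ℚ) : inn n v w = v ⬝ᵥ w := rfl

theorem sumElim_dotProduct {ι α : Type*} [Fintype ι] [CommSemiring α] (w : ι → α)
    (v : ι ⊕ ι → α) : Sum.elim w w ⬝ᵥ v = ∑ t, w t * (v (inl t) + v (inr t)) := by
  simp only [dotProduct, Fintype.sum_sum_type, elim_inl, elim_inr, mul_add, sum_add_distrib]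

theorem sumElim_dotProduct_combination {n : ℕ} (w : Fin n → ℚ) (a b : Fin n → Fin n → ℚ) :
    Sum.elim w w ⬝ᵥ ((∑ i, ∑ j, a i j • (epsV n i - deltaV n j))
      + ∑ i, ∑ j, b i j • (deltaV n i - epsV n j)) = ∑ i, ∑ j, (a i j + b i j) * (w i - w j) := by
  simp only [dotProduct_add, dotProduct_sum, dotProduct_smul, dotProduct_sub, epsV, deltaV,
    dotProduct_single, elim_inl, elim_inr, mul_one, smul_eq_mul, ← sum_add_distrib]
  exact sum_congr rfl fun i _ => sum_congr rfl fun j _ => by ring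

theorem stmt1_general (n : ℕ)
    (a b : Fin n → Fin n → ℕ)
    (ha : ∀ i j : Fin n, ¬ (j < i) → a i j = 0)
    (hb : ∀ i j : Fin n, ¬ (j < i) → b i j = 0)
    (lam : (Fin n ⊕ Fin n) → ℚ)
    (hlam : lam = (∑ i, ∑ j, (a i j : ℚ) • (epsV n i - deltaV n j))
              + (∑ i, ∑ j, (b i j : ℚ) • (deltaV n i - epsV n j)))
    (hdom1 : ∀ (s : Fin n) (hs : (s : ℕ) + 1 < n),
      0 ≤ inn n (epsV n s - epsV n ⟨(s : ℕ) + 1, hs⟩) lam)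
    (hdom2 : ∀ (s : Fin n) (hs : (s : ℕ) + 1 < n),
      0 ≤ inn n (deltaV n s - deltaV n ⟨(s : ℕ) + 1, hs⟩) lam) :
    lam = 0 := by
  set z : Fin n → ℚ := fun t => lam (inl t) + lam (inr t)
  have hz_anti : Antitone z := Fin.antitone_of_forall_succ_le fun s hs => by
    have h1 := hdom1 s hs
    have h2 := hdom2 s hs
    simp only [inn_eq_dotProduct, epsV, deltaV, sub_dotProduct, single_dotProduct, one_mul]
      at h1 h2
    linarith
  have hcomb : ∀ w : Fin n → ℚ,
      ∑ t, w t * z t = ∑ i, ∑ j, ((a i j + b i j : ℕ) : ℚ) * (w i - w j) := fun w => by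
    rw [← sumElim_dotProduct, hlam, sumElim_dotProduct_combination]
    simp only [Nat.cast_add]
  have hz_sum : ∑ t, z t = 0 := by simpa using hcomb 1
  have hval : StrictMono fun t : Fin n => (t : ℚ) := Nat.strictMono_cast.comp Fin.val_strictMono
  have hweighted : ∑ t : Fin n, (t : ℚ) * z t ≤ 0 :=
    hval.monotone.sum_mul_nonpos_of_antitone hz_anti hz_sum
  have hc := eq_zero_of_sum_mul_sub_nonpos hval (fun i j => by positivity)
    (fun i j hji => by simp [ha i j hji, hb i j hji]) ((hcomb _).symm.trans_le hweighted)
  have hab : ∀ i j, a i j = 0 ∧ b i j = 0 := fun i j =>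
    Nat.add_eq_zero_iff.1 (Nat.cast_eq_zero.1 (congrFun₂ hc i j))
  simp [hlam, hab]

/-- If `λ` is a nonnegative integer combination of the vectors `ε_i - δ_j` (`i > j`) and
`δ_k - ε_l` (`k > l`), and `λ` satisfies the dominance conditions
`⟨ε_s - ε_{s+1}, λ⟩ ≥ 0` and `⟨δ_s - δ_{s+1}, λ⟩ ≥ 0` for all `1 ≤ s ≤ n-1`,
then `λ = 0`. -/
theorem stmt1 (n : ℕ) (hn : 1 ≤ n)
    (a b : Fin n → Fin n → ℕ)
    (ha : ∀ i j : Fin n, ¬ (j < i) → a i j = 0)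
    (hb : ∀ i j : Fin n, ¬ (j < i) → b i j = 0)
    (lam : (Fin n ⊕ Fin n) → ℚ)
    (hlam : lam = (∑ i, ∑ j, (a i j : ℚ) • (epsV n i - deltaV n j))
              + (∑ i, ∑ j, (b i j : ℚ) • (deltaV n i - epsV n j)))
    (hdom1 : ∀ (s : Fin n) (hs : (s : ℕ) + 1 < n),
      0 ≤ inn n (epsV n s - epsV n ⟨(s : ℕ) + 1, hs⟩) lam)
    (hdom2 : ∀ (s : Fin n) (hs : (s : ℕ) + 1 < n),
      0 ≤ inn n (deltaV n s - deltaV n ⟨(s : ℕ) + 1, hs⟩) lam) :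
    lam = 0 :=
  stmt1_general n a b ha hb lam hlam hdom1 hdom2
end

section
/- Let G be a group and res : T(g) → T(p) a group homomorphism between the endotrivial groups, and Ind : stable p-modules → stable g-modules a functor satisfying the projection formula Ind(M|_p ⊗ N) ≅ M ⊗ Ind(N) for g-modules M, with Ind(k_ev) ≅ k_ev and Ind taking projectives to projectives. Then res is injective: if M is an indecomposable endotrivial g-module with M|_p ≅ k_ev ⊕ P (P projective), then M ≅ k_ev. -/
universe u

theorem Equivalence.of_sum_of_indecomposable {α : Type*} {r : α → α → Prop} (hr : Equivalence r)
    {sum : α → α → α} {zero : α}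
    (hsumIsoR : ∀ a b c, r b c → r (sum a b) (sum a c)) (hsumZero : ∀ a, r (sum a zero) a)
    {M k Q : α} (hindec : ∀ X Y, r M (sum X Y) → r X zero ∨ r Y zero) (hk : ¬ r k zero)
    (hM : r M (sum k Q)) : r M k := by
  rcases hindec k Q hM with hk0 | hQ0
  · exact absurd hk0 hk
  · exact hr.trans hM (hr.trans (hsumIsoR k Q zero hQ0) (hsumZero k))

theorem stmt14_general (Og Op : Type u)
    (isog : Og → Og → Prop) (isop : Op → Op → Prop)
    (hg : Equivalence isog)
    (res : Og → Op) (Ind : Op → Og)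
    (sumg : Og → Og → Og) (sump : Op → Op → Op)
    (tensg : Og → Og → Og)
    (kg zg : Og) (kp : Op)
    (hIndIso : ∀ a b, isop a b → isog (Ind a) (Ind b))
    (hIndSum : ∀ a b, isog (Ind (sump a b)) (sumg (Ind a) (Ind b)))
    (hIndK : isog (Ind kp) kg)
    (M : Og) (P : Op)
    (hres : isop (res M) (sump kp P))
    (hprojformula : isog (Ind (res M)) (tensg M (Ind kp)))
    (htensIso : ∀ a b, isog a b → isog (tensg M a) (tensg M b))
    (htensUnit : isog (tensg M kg) M)
    (hsumIsoL : ∀ a b c, isog a b → isog (sumg a c) (sumg b c))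
    (hsumIsoR : ∀ a b c, isog b c → isog (sumg a b) (sumg a c))
    (hsumZero : ∀ a, isog (sumg a zg) a)
    (hindec : ∀ X Y, isog M (sumg X Y) → isog X zg ∨ isog Y zg)
    (hk0 : ¬ isog kg zg) :
    isog M kg := by
  let _ : Trans isog isog isog := ⟨hg.trans⟩
  have hM : isog M (sumg kg (Ind P)) :=
    calc isog M (tensg M kg) := hg.symm htensUnit
      isog _ (tensg M (Ind kp)) := htensIso _ _ (hg.symm hIndK)
      isog _ (Ind (res M)) := hg.symm hprojformula
      isog _ (Ind (sump kp P)) := hIndIso _ _ hres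
      isog _ (sumg (Ind kp) (Ind P)) := hIndSum kp P
      isog _ (sumg kg (Ind P)) := hsumIsoL _ _ _ hIndK
  exact hg.of_sum_of_indecomposable hsumIsoR hsumZero hindec hk0 hM

/-- Injectivity of restriction `T(g) → T(p)`: if `Ind` satisfies the projection formula
`Ind(M|_p ⊗ N) ≅ M ⊗ Ind(N)`, sends `k_ev` to `k_ev` and direct sums to direct sums, and
`M` is an indecomposable endotrivial `g`-module with `M|_p ≅ k_ev ⊕ P` (`P` projective),
then `M ≅ k_ev`.  Here `Og`, `Op` are the `g`- and `p`-modules up to the isomorphism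
relations `isog`, `isop`; `zg` is the zero module. -/
theorem stmt14 (Og Op : Type u)
    (isog : Og → Og → Prop) (isop : Op → Op → Prop)
    (hg : Equivalence isog) (hp : Equivalence isop)
    (res : Og → Op) (Ind : Op → Og)
    (sumg : Og → Og → Og) (sump : Op → Op → Op)
    (tensg : Og → Og → Og)
    (kg zg : Og) (kp : Op)
    (Projp : Op → Prop) (Projg : Og → Prop)
    (hIndIso : ∀ a b, isop a b → isog (Ind a) (Ind b))
    (hIndSum : ∀ a b, isog (Ind (sump a b)) (sumg (Ind a) (Ind b)))
    (hIndK : isog (Ind kp) kg)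
    (hIndProj : ∀ a, Projp a → Projg (Ind a))
    (M : Og) (P : Op) (hP : Projp P)
    (hres : isop (res M) (sump kp P))
    (hprojformula : isog (Ind (res M)) (tensg M (Ind kp)))
    (htensIso : ∀ a b, isog a b → isog (tensg M a) (tensg M b))
    (htensUnit : isog (tensg M kg) M)
    (hsumIsoL : ∀ a b c, isog a b → isog (sumg a c) (sumg b c))
    (hsumIsoR : ∀ a b c, isog b c → isog (sumg a b) (sumg a c))
    (hsumZero : ∀ a, isog (sumg a zg) a)
    (hindec : ∀ X Y, isog M (sumg X Y) → isog X zg ∨ isog Y zg)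
    (hk0 : ¬ isog kg zg) :
    isog M kg :=
  stmt14_general Og Op isog isop hg res Ind sumg sump tensg kg zg kp hIndIso hIndSum hIndK M P hres
    hprojformula htensIso htensUnit hsumIsoL hsumIsoR hsumZero hindec hk0
end

section
/- Sum-of-inequalities lemma for the gl(n|n) dominance argument: let (a_{ij})_{i>j} and (b_{ij})_{i>j} be nonnegative reals indexed by pairs 1 ≤ j < i ≤ n. Suppose that for each s = 1,...,n−1 the quantities A_s := (Σ_{j<s} a_{sj} − Σ_{j<s+1} a_{s+1,j}) + (Σ_{i>s+1} b_{i,s+1} − Σ_{i>s} b_{is}) and the analogous B_s with a and b swapped are all ≥ 0. Then summing over s yields Σ_s (A_s + B_s) = −Σ_{i} (a_{i,1} + a_{n,i} + b_{i,1} + b_{n,i}) + (nonnegative interior terms appearing with multiplicity ≤ total), forcing a_{i,1} = a_{n,j} = b_{i,1} = b_{n,j} = 0 for all valid i, j. -/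
/-!
Both `A_s` and `B_s` are differences of consecutive row sums `Σ_{j<s} c_{sj}` plus differences
of consecutive column sums `Σ_{i>s} c_{is}` of the strictly lower triangular arrays `a` and `b`.
Summing over `s` telescopes to minus the last row sums and the first column sums. This total is
`≥ 0` while each of these sums of nonnegative coefficients is `≥ 0`, so all of them vanish.
-/

open Finset

section Telescoping

variable {M : Type*} [AddCommGroup M]

def rowSum (c : ℕ → ℕ → M) (s : ℕ) : M := ∑ j ∈ Ico 1 s, c s j

def colSum (n : ℕ) (c : ℕ → ℕ → M) (s : ℕ) : M := ∑ i ∈ Ioc s n, c i s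

theorem sum_Ico_rowSum_sub_add_colSum_sub {n : ℕ} (hn : 1 ≤ n) (c d : ℕ → ℕ → M) :
    ∑ s ∈ Ico 1 n, ((rowSum c s - rowSum c (s + 1)) + (colSum n d (s + 1) - colSum n d s)) =
      -(rowSum c n + colSum n d 1) := by
  have hrow : ∑ s ∈ Ico 1 n, (rowSum c s - rowSum c (s + 1)) = -rowSum c n := by
    rw [← neg_eq_iff_eq_neg, ← sum_neg_distrib]
    simp only [neg_sub]
    rw [sum_Ico_sub _ hn]
    simp [rowSum]
  have hcol : ∑ s ∈ Ico 1 n, (colSum n d (s + 1) - colSum n d s) = -colSum n d 1 := by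
    rw [sum_Ico_sub _ hn]
    simp [colSum]
  rw [sum_add_distrib, hrow, hcol, neg_add]

end Telescoping

/-- Sum-of-inequalities lemma for the `gl(n|n)` dominance argument: with nonnegative
coefficients `a_{ij}, b_{ij}` (`1 ≤ j < i ≤ n`) and
`A_s = (Σ_{j<s} a_{sj} - Σ_{j<s+1} a_{s+1,j}) + (Σ_{i>s+1} b_{i,s+1} - Σ_{i>s} b_{is})`,
`B_s` the same with `a` and `b` swapped, if all `A_s, B_s ≥ 0` for `s = 1,…,n-1`, then
all boundary coefficients vanish: `a_{i,1} = b_{i,1} = 0` for `1 < i ≤ n` and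
`a_{n,j} = b_{n,j} = 0` for `1 ≤ j < n`. -/
theorem stmt15 (n : ℕ) (hn : 1 ≤ n) (a b : ℕ → ℕ → ℝ)
    (ha : ∀ i j, 0 ≤ a i j) (hb : ∀ i j, 0 ≤ b i j)
    (A B : ℕ → ℝ)
    (hAdef : ∀ s, A s = ((∑ j ∈ Ico 1 s, a s j) - ∑ j ∈ Ico 1 (s + 1), a (s + 1) j)
        + ((∑ i ∈ Ioc (s + 1) n, b i (s + 1)) - ∑ i ∈ Ioc s n, b i s))
    (hBdef : ∀ s, B s = ((∑ j ∈ Ico 1 s, b s j) - ∑ j ∈ Ico 1 (s + 1), b (s + 1) j)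
        + ((∑ i ∈ Ioc (s + 1) n, a i (s + 1)) - ∑ i ∈ Ioc s n, a i s))
    (hA : ∀ s ∈ Ico 1 n, 0 ≤ A s) (hB : ∀ s ∈ Ico 1 n, 0 ≤ B s) :
    (∀ i ∈ Ioc 1 n, a i 1 = 0 ∧ b i 1 = 0) ∧
    (∀ j ∈ Ico 1 n, a n j = 0 ∧ b n j = 0) := by
  have hsumA : ∑ s ∈ Ico 1 n, A s = -(rowSum a n + colSum n b 1) := by
    rw [← sum_Ico_rowSum_sub_add_colSum_sub hn a b]
    exact sum_congr rfl fun s _ => hAdef s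
  have hsumB : ∑ s ∈ Ico 1 n, B s = -(rowSum b n + colSum n a 1) := by
    rw [← sum_Ico_rowSum_sub_add_colSum_sub hn b a]
    exact sum_congr rfl fun s _ => hBdef s
  have htotal : ∑ s ∈ Ico 1 n, (A s + B s) =
      -((rowSum a n + colSum n b 1) + (rowSum b n + colSum n a 1)) := by
    rw [sum_add_distrib, hsumA, hsumB]
    ring
  have htotal_nonneg : 0 ≤ ∑ s ∈ Ico 1 n, (A s + B s) :=
    sum_nonneg fun s hs => add_nonneg (hA s hs) (hB s hs)
  have hra_nonneg : 0 ≤ rowSum a n := sum_nonneg fun j _ => ha n j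
  have hrb_nonneg : 0 ≤ rowSum b n := sum_nonneg fun j _ => hb n j
  have hca_nonneg : 0 ≤ colSum n a 1 := sum_nonneg fun i _ => ha i 1
  have hcb_nonneg : 0 ≤ colSum n b 1 := sum_nonneg fun i _ => hb i 1
  obtain ⟨hra, hrb, hca, hcb⟩ : rowSum a n = 0 ∧ rowSum b n = 0 ∧ colSum n a 1 = 0 ∧
      colSum n b 1 = 0 := by
    refine ⟨?_, ?_, ?_, ?_⟩ <;> linarith
  rw [rowSum, sum_eq_zero_iff_of_nonneg fun j _ => ha n j] at hra
  rw [rowSum, sum_eq_zero_iff_of_nonneg fun j _ => hb n j] at hrb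
  rw [colSum, sum_eq_zero_iff_of_nonneg fun i _ => ha i 1] at hca
  rw [colSum, sum_eq_zero_iff_of_nonneg fun i _ => hb i 1] at hcb
  exact ⟨fun i hi => ⟨hca i hi, hcb i hi⟩, fun j hj => ⟨hra j hj, hrb j hj⟩⟩
end
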